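/- Conversely, let a : ℚ_p → ℝ be a nonnegative even probability density and suppose â(ξ) = 1 for some ξ ≠ 0. Then a(x) = 0 for almost every x with |x|_p > |ξ|_p^{−1}. -/

import Mathlib

open MeasureTheory
open scoped ENNReal

/-- The `p`-adic fractional part `{x}_p`. -/
noncomputable def pFract (p : ℕ) [Fact p.Prime] (x : ℚ_[p]) : ℚ :=
  Classical.epsilon fun r : ℚ =>
    0 ≤ r ∧ r < 1 ∧ (∃ m k : ℕ, r = (m : ℚ) / (p : ℚ) ^ k) ∧ ‖x - (r : ℚ_[p])‖ ≤ 1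

/-- The standard additive character `χ(x) = exp(2πi {x}_p)` of `ℚ_p`. -/
noncomputable def padicChar (p : ℕ) [Fact p.Prime] (x : ℚ_[p]) : ℂ :=
  Complex.exp (2 * Real.pi * Complex.I * ((pFract p x : ℚ) : ℂ))

/-!
Since `a ≥ 0` and `Re χ ≤ 1`, the integral of `(1 - Re χ(ξx)) a(x)`, which equals
`1 - Re â(ξ) = 0`, has a nonnegative integrand, so `(1 - Re χ(ξx)) a(x) = 0` almost everywhere.
For `|x|_p > |ξ|_p⁻¹` we have `|ξx|_p > 1`, hence `{ξx}_p ∈ (0, 1)` and `Re χ(ξx) < 1`.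
-/

namespace Padic

variable {p : ℕ} [hp : Fact p.Prime]

lemma exists_norm_pow_mul_le_one (x : ℚ_[p]) : ∃ n : ℕ, ‖(p : ℚ_[p]) ^ n * x‖ ≤ 1 := by
  obtain ⟨n, hn⟩ := pow_unbounded_of_one_lt ‖x‖ (mod_cast hp.out.one_lt : (1 : ℝ) < p)
  refine ⟨n, ?_⟩
  rw [norm_mul, norm_p_pow, zpow_neg, zpow_natCast,
    inv_mul_le_one₀ (pow_pos (mod_cast hp.out.pos) n)]
  exact hn.le

/-- Scale `x` into `ℤ_p` by `p ^ k` and approximate the result modulo `p ^ k` by a natural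
number. -/
lemma exists_norm_sub_natCast_div_pow_le_one (x : ℚ_[p]) :
    ∃ m k : ℕ, m < p ^ k ∧ ‖x - ((m / p ^ k : ℚ) : ℚ_[p])‖ ≤ 1 := by
  obtain ⟨k, hk⟩ := exists_norm_pow_mul_le_one x
  set z : ℤ_[p] := ⟨(p : ℚ_[p]) ^ k * x, hk⟩
  obtain ⟨w, hw⟩ := Ideal.mem_span_singleton'.mp (PadicInt.appr_spec k z)
  refine ⟨z.appr k, k, z.appr_lt k, ?_⟩
  have hpk : (p : ℚ_[p]) ^ k ≠ 0 := pow_ne_zero _ (mod_cast hp.out.ne_zero)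
  have hw' : (w : ℚ_[p]) * (p : ℚ_[p]) ^ k = (p : ℚ_[p]) ^ k * x - z.appr k := by
    simpa using congrArg ((↑) : ℤ_[p] → ℚ_[p]) hw
  have : x - ((z.appr k / p ^ k : ℚ) : ℚ_[p]) = w := by
    push_cast
    field_simp
    linear_combination -hw'
  rw [this]
  exact w.norm_le_one

end Padic

section padicChar

variable {p : ℕ} [Fact p.Prime]

lemma pFract_spec (x : ℚ_[p]) :
    0 ≤ pFract p x ∧ pFract p x < 1 ∧
      (∃ m k : ℕ, pFract p x = (m : ℚ) / (p : ℚ) ^ k) ∧ ‖x - (pFract p x : ℚ_[p])‖ ≤ 1 := by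
  obtain ⟨m, k, hmk, hx⟩ := Padic.exists_norm_sub_natCast_div_pow_le_one x
  have hpk : (0 : ℚ) < (p : ℚ) ^ k := pow_pos (mod_cast (Fact.out : p.Prime).pos) k
  exact Classical.epsilon_spec (p := fun r : ℚ ↦ 0 ≤ r ∧ r < 1 ∧
    (∃ m k : ℕ, r = (m : ℚ) / (p : ℚ) ^ k) ∧ ‖x - (r : ℚ_[p])‖ ≤ 1)
    ⟨_, by positivity, (div_lt_one hpk).mpr (mod_cast hmk), ⟨m, k, rfl⟩, hx⟩

lemma pFract_pos_of_one_lt_norm {x : ℚ_[p]} (hx : 1 < ‖x‖) : 0 < pFract p x := by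
  obtain ⟨hnonneg, -, -, hdist⟩ := pFract_spec x
  refine hnonneg.lt_of_ne fun h ↦ hx.not_ge ?_
  simpa [← h] using hdist

lemma re_padicChar (x : ℚ_[p]) :
    (padicChar p x).re = Real.cos (2 * Real.pi * pFract p x) := by
  rw [padicChar, ← Complex.exp_ofReal_mul_I_re]
  push_cast
  ring_nf

lemma re_padicChar_le_one (x : ℚ_[p]) : (padicChar p x).re ≤ 1 := by
  rw [re_padicChar]
  exact Real.cos_le_one _

lemma re_padicChar_lt_one_of_one_lt_norm {x : ℚ_[p]} (hx : 1 < ‖x‖) :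
    (padicChar p x).re < 1 := by
  have hpos : (0 : ℝ) < pFract p x := mod_cast pFract_pos_of_one_lt_norm hx
  have hlt : (pFract p x : ℝ) < 1 := mod_cast (pFract_spec x).2.1
  rw [re_padicChar]
  refine (Real.cos_le_one _).lt_of_ne fun h ↦ ?_
  have := (Real.cos_eq_one_iff_of_lt_of_lt (by nlinarith [Real.pi_pos])
    (by nlinarith [Real.pi_pos])).mp h
  nlinarith [Real.pi_pos]

end padicChar

lemma ae_eq_zero_of_integral_mul_eq_integral {α : Type*} [MeasurableSpace α] {μ : Measure α}
    {a : α → ℝ} {c : α → ℂ} (ha : 0 ≤ᵐ[μ] a) (ha_int : Integrable a μ)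
    (hca_int : Integrable (fun x ↦ c x * a x) μ) (hc : ∀ x, (c x).re ≤ 1)
    (h : ∫ x, c x * a x ∂μ = ∫ x, a x ∂μ) :
    ∀ᵐ x ∂μ, (c x).re < 1 → a x = 0 := by
  have hre : ∀ x, (c x * a x).re = (c x).re * a x := fun x ↦ Complex.re_mul_ofReal _ _
  set g : α → ℝ := fun x ↦ a x - (c x * a x).re
  have hg_nonneg : 0 ≤ᵐ[μ] g := by
    filter_upwards [ha] with x hx
    simpa [g, hre] using mul_le_of_le_one_left hx (hc x)
  have hg_int : Integrable g μ := ha_int.sub hca_int.re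
  have hg_zero : ∫ x, g x ∂μ = 0 := by
    rw [show g = fun x ↦ a x - RCLike.re (c x * a x) from rfl, integral_sub ha_int hca_int.re,
      integral_re hca_int, h]
    simp
  filter_upwards [(integral_eq_zero_iff_of_nonneg_ae hg_nonneg hg_int).mp hg_zero] with x hx hlt
  have : (1 - (c x).re) * a x = 0 := by simpa [g, hre, sub_mul] using hx
  exact (mul_eq_zero.mp this).resolve_left (sub_ne_zero.mpr hlt.ne')

theorem padic_density_vanishes_of_fourier_eq_one_general (p : ℕ) [Fact p.Prime]
    [MeasurableSpace ℚ_[p]] [BorelSpace ℚ_[p]]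
    (μ : Measure ℚ_[p])
    (a : ℚ_[p] → ℝ) (ha_nonneg : ∀ x, 0 ≤ a x)
    (ha_int : Integrable a μ) (ha_one : ∫ x, a x ∂μ = 1)
    (ξ : ℚ_[p]) (hξ : ξ ≠ 0)
    (hhat : ∫ x, padicChar p (ξ * x) * (a x : ℂ) ∂μ = 1) :
    ∀ᵐ x ∂(μ.restrict {x : ℚ_[p] | ‖ξ‖⁻¹ < ‖x‖}), a x = 0 := by
  have hhat_int : Integrable (fun x ↦ padicChar p (ξ * x) * (a x : ℂ)) μ :=
    .of_integral_ne_zero (by rw [hhat]; exact one_ne_zero)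
  have hvanish := ae_eq_zero_of_integral_mul_eq_integral (Filter.Eventually.of_forall ha_nonneg)
    ha_int hhat_int (fun x ↦ re_padicChar_le_one (ξ * x)) (by rw [hhat, ha_one, Complex.ofReal_one])
  have hS : MeasurableSet {x : ℚ_[p] | ‖ξ‖⁻¹ < ‖x‖} :=
    measurableSet_lt measurable_const measurable_norm
  filter_upwards [ae_restrict_of_ae hvanish, ae_restrict_mem hS] with x hx hxS
  refine hx (re_padicChar_lt_one_of_one_lt_norm ?_)
  rwa [norm_mul, ← inv_lt_iff_one_lt_mul₀' (norm_pos_iff.mpr hξ)]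

/-- If `a` is a nonnegative even probability density on `ℚ_p` with `â(ξ) = 1`
for some `ξ ≠ 0`, then `a(x) = 0` for almost every `x` with `|x|_p > |ξ|_p⁻¹`. -/
theorem padic_density_vanishes_of_fourier_eq_one (p : ℕ) [Fact p.Prime]
    [MeasurableSpace ℚ_[p]] [BorelSpace ℚ_[p]]
    (μ : Measure ℚ_[p]) [μ.IsAddHaarMeasure]
    (hμ : μ {x : ℚ_[p] | ‖x‖ ≤ 1} = 1)
    (a : ℚ_[p] → ℝ) (ha_nonneg : ∀ x, 0 ≤ a x) (ha_even : ∀ x, a (-x) = a x)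
    (ha_int : Integrable a μ) (ha_one : ∫ x, a x ∂μ = 1)
    (ξ : ℚ_[p]) (hξ : ξ ≠ 0)
    (hhat : ∫ x, padicChar p (ξ * x) * (a x : ℂ) ∂μ = 1) :
    ∀ᵐ x ∂(μ.restrict {x : ℚ_[p] | ‖ξ‖⁻¹ < ‖x‖}), a x = 0 :=
  padic_density_vanishes_of_fourier_eq_one_general p μ a ha_nonneg ha_int ha_one ξ hξ hhat
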